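/- Graphical representation of the two point function: for every N ∈ ℕ, every β ∈ ℝ, every symmetric array of real numbers (g_{ij})_{1≤i,j≤N} with g_{ii} = 0, and all i ≠ j in [N], the Gibbs two point function satisfies ⟨σ_i σ_j⟩ = tanh(β g_{ij}) + (1 − tanh²(β g_{ij})) · Ẑ_N^{-1} · Σ_{γ∈Γ_sc : {i,j}∈E_γ} ∏_{e∈E_γ, e≠{i,j}} tanh(β g_e), where Ẑ_N = Σ_{γ∈Γ_sc} w(γ); moreover ⟨σ_i σ_i⟩ = 1 for all i. -/

import Mathlib

open MeasureTheory ProbabilityTheory Filter Topology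
open scoped NNReal ENNReal

namespace SK

/-- Edges are ordered pairs `(u, v)` with `u < v`. -/
abbrev Edge (N : ℕ) := Fin N × Fin N

variable {N : ℕ}

/-- An edge set determines a simple graph if every edge is an increasing pair. -/
def IsGraph (E : Finset (Edge N)) : Prop := ∀ e ∈ E, e.1 < e.2

/-- Degree of a vertex: the number of edges containing it. -/
def degree (E : Finset (Edge N)) (v : Fin N) : ℕ :=
  (E.filter fun e => e.1 = v ∨ e.2 = v).card

/-- Vertex set of a graph given by an edge set (no isolated vertices). -/
def verts (E : Finset (Edge N)) : Finset (Fin N) :=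
  Finset.univ.filter fun v => 0 < degree E v

/-- The simple graph associated to an edge set. -/
def toSG (E : Finset (Edge N)) : SimpleGraph (Fin N) where
  Adj u v := u ≠ v ∧ ((u, v) ∈ E ∨ (v, u) ∈ E)
  symm := ⟨fun _ _ h => ⟨h.1.symm, h.2.symm⟩⟩
  loopless := ⟨fun _ h => h.1 rfl⟩

/-- Connectivity of the graph induced on its vertex set. -/
def GConnected (E : Finset (Edge N)) : Prop :=
  ∀ u ∈ verts E, ∀ v ∈ verts E, (toSG E).Reachable u v

/-- Simple closed graph: every vertex has even degree (member of `Γ_sc`;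
the empty graph is allowed). -/
def IsClosed (E : Finset (Edge N)) : Prop :=
  IsGraph E ∧ ∀ v, Even (degree E v)

/-- Cycle (simple loop, member of `Γ_loop`): connected with all degrees equal to two. -/
def IsCycle (E : Finset (Edge N)) : Prop :=
  IsGraph E ∧ E.Nonempty ∧ GConnected E ∧ ∀ v ∈ verts E, degree E v = 2

/-- Self-avoiding path from `i` to `j` (member of `Γ_p^{ij}`): connected, exactly the two
vertices `i ≠ j` have degree one, and all other vertices have degree two. -/
def IsPath (i j : Fin N) (E : Finset (Edge N)) : Prop :=
  IsGraph E ∧ i ≠ j ∧ GConnected E ∧ i ∈ verts E ∧ j ∈ verts E ∧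
    degree E i = 1 ∧ degree E j = 1 ∧ ∀ v ∈ verts E, v ≠ i → v ≠ j → degree E v = 2

/-- The edge `{i, j}` as an ordered pair. -/
def mkEdge (i j : Fin N) : Edge N := if i < j then (i, j) else (j, i)

/-- Weight of a graph: `w(γ) = ∏_{e ∈ γ} tanh(β g_e)`, with `w(∅) = 1`. -/
noncomputable def wt (β : ℝ) (g : Fin N → Fin N → ℝ) (E : Finset (Edge N)) : ℝ :=
  ∏ e ∈ E, Real.tanh (β * g e.1 e.2)

/-- Polynomial weight of a graph: `∏_{e ∈ γ} β g_e`. -/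
noncomputable def pwt (β : ℝ) (g : Fin N → Fin N → ℝ) (E : Finset (Edge N)) : ℝ :=
  ∏ e ∈ E, β * g e.1 e.2

/-- Spin value of a Boolean configuration entry. -/
def spin (b : Bool) : ℝ := if b then 1 else -1

/-- The set of increasing pairs `i < j`. -/
def pairs (N : ℕ) : Finset (Edge N) := Finset.univ.filter fun e => e.1 < e.2

/-- SK Hamiltonian `H_N(σ) = β ∑_{i<j} g_{ij} σ_i σ_j`. -/
noncomputable def hamil (β : ℝ) (g : Fin N → Fin N → ℝ) (σ : Fin N → ℝ) : ℝ :=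
  β * ∑ e ∈ pairs N, g e.1 e.2 * σ e.1 * σ e.2

/-- Gibbs expectation `⟨f⟩`. -/
noncomputable def gibbs (β : ℝ) (g : Fin N → Fin N → ℝ) (f : (Fin N → ℝ) → ℝ) : ℝ :=
  (∑ s : Fin N → Bool, f (fun i => spin (s i)) * Real.exp (hamil β g fun i => spin (s i))) /
    ∑ s : Fin N → Bool, Real.exp (hamil β g fun i => spin (s i))

/-- Two point correlation matrix `M = (⟨σ_i σ_j⟩)`. -/
noncomputable def Mmat (β : ℝ) (g : Fin N → Fin N → ℝ) : Matrix (Fin N) (Fin N) ℝ :=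
  Matrix.of fun i j => gibbs β g fun σ => σ i * σ j

/-- Self-avoiding path matrix `P`: `p_{ii} = 1` and
`p_{ij} = ∑_{γ ∈ Γ_p^{ij}} ∏_{e ∈ γ} β g_e` for `i ≠ j`. -/
noncomputable def Pmat (β : ℝ) (g : Fin N → Fin N → ℝ) : Matrix (Fin N) (Fin N) ℝ :=
  Matrix.of fun i j =>
    if i = j then 1 else ∑ᶠ E ∈ {E : Finset (Edge N) | IsPath i j E}, pwt β g E

/-- Frobenius (Hilbert–Schmidt) norm of a matrix. -/
noncomputable def frobNorm (A : Matrix (Fin N) (Fin N) ℝ) : ℝ :=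
  Real.sqrt (∑ i, ∑ j, A i j ^ 2)

/-- Euclidean operator norm of a matrix: `sup_{‖v‖ = 1} ‖A v‖`. -/
noncomputable def opNorm (A : Matrix (Fin N) (Fin N) ℝ) : ℝ :=
  sSup {r : ℝ | ∃ v : Fin N → ℝ, ∑ i, v i ^ 2 = 1 ∧ r = Real.sqrt (∑ i, A.mulVec v i ^ 2)}

/-- The resolvent `((1 + β²)·id - βG)⁻¹`. -/
noncomputable def resolvent (β : ℝ) (G : Matrix (Fin N) (Fin N) ℝ) : Matrix (Fin N) (Fin N) ℝ :=
  ((1 + β ^ 2) • (1 : Matrix (Fin N) (Fin N) ℝ) - β • G)⁻¹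

/-- Large graph threshold `k_N = (log N)^{3/2}`. -/
noncomputable def kN (N : ℕ) : ℝ := Real.log N ^ (3 / 2 : ℝ)

/-- `E` is an edge-disjoint union of self-avoiding paths with endpoints in `W`. -/
def IsPathUnion (W : Finset (Fin N)) (E : Finset (Edge N)) : Prop :=
  ∃ (k : ℕ) (p : Fin k → Finset (Edge N)) (a b : Fin k → Fin N),
    (∀ t, IsPath (a t) (b t) (p t)) ∧ (∀ t, a t ∈ W ∧ b t ∈ W) ∧
    (∀ s t, s ≠ t → Disjoint (p s) (p t)) ∧ E = Finset.univ.biUnion p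

/-- Relabeling of a graph by a permutation of the vertices. -/
def relabel (π : Equiv.Perm (Fin N)) (E : Finset (Edge N)) : Finset (Edge N) :=
  E.image fun e => mkEdge (π e.1) (π e.2)

/-- Two graphs on the same vertex set are isomorphic if one is a relabeling of the other. -/
def Isomorphic (E E' : Finset (Edge N)) : Prop :=
  ∃ π : Equiv.Perm (Fin N), relabel π E = E'

/-- The set `T_{η₁}^{ij}` of multiplicity-two graphs `ψ₂(γ∘τ) = γ ∩ τ` arising from pairs
`(γ, τ) ∈ S_{η₁}^{ij}`, i.e. `γ ∈ Γ_loop`, `τ ∈ Γ_sc`, `{i,j} ∈ γ`, `|V_γ ∩ V_τ| ≥ 2`,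
`|γ| < c` and `ψ₁(γ∘τ) = η₁`. -/
def Tset (N : ℕ) (c : ℝ) (i j : Fin N) (η₁ : Finset (Edge N)) : Set (Finset (Edge N)) :=
  {η₂ | ∃ γ τ : Finset (Edge N), IsCycle γ ∧ IsClosed τ ∧ mkEdge i j ∈ γ ∧
    2 ≤ (verts γ ∩ verts τ).card ∧ (γ.card : ℝ) < c ∧
    (γ ∪ τ) \ (γ ∩ τ) = η₁ ∧ γ ∩ τ = η₂}

/-- The coupling hypotheses of the SK model: `(g_{ij})_{i<j}` are independent centered
Gaussian random variables of variance `1/N`, extended symmetrically with `g_{ii} = 0`. -/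
def IsSKCoupling (N : ℕ) {Ω : Type} [MeasureSpace Ω] (g : Ω → Fin N → Fin N → ℝ) : Prop :=
  IsProbabilityMeasure (ℙ : Measure Ω) ∧
    (∀ i j, Measurable fun ω => g ω i j) ∧
    (∀ ω i j, g ω j i = g ω i j) ∧
    (∀ ω i, g ω i i = 0) ∧
    (∀ i j : Fin N, i < j →
      Measure.map (fun ω => g ω i j) ℙ = gaussianReal 0 (N : ℝ≥0)⁻¹) ∧
    iIndepFun
      (fun (e : {e : Edge N // e.1 < e.2}) ω => g ω e.1.1 e.1.2) ℙ

/-! High-temperature expansion. Since `σ_u σ_v = ±1`,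
`exp(β g_e σ_u σ_v) = cosh(β g_e) (1 + tanh(β g_e) σ_u σ_v)`; expanding the product over all
edges writes `e^{H_N}` as a sum over edge sets `E` of `w(E) ∏_{e ∈ E} σ_u σ_v`, and summing over
spins keeps exactly the closed `E`. Multiplying by `σ_i σ_j`, the monomial of `e₀ = {i,j}`, turns
`E` into `E ∆ {e₀}`, so up to the same positive constant the numerator of `⟨σ_i σ_j⟩` is
`∑_{γ ∈ Γ_sc} w(γ ∆ {e₀})` and the denominator is `Ẑ_N`. Splitting both sums according to
whether `e₀ ∈ γ` gives `a + t b` and `t a + b` with `t = tanh(β g_{ij})`, and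
`(a + t b) / (t a + b) = t + (1 - t²) a / (t a + b)`. -/

open Finset
open scoped symmDiff

section Spins

lemma spin_mul_self (b : Bool) : spin b * spin b = 1 := by
  cases b <;> norm_num [spin]

lemma spin_mul_spin_eq_one_or_neg_one (a b : Bool) :
    spin a * spin b = 1 ∨ spin a * spin b = -1 := by
  cases a <;> cases b <;> norm_num [spin]

lemma sum_spin_pow (k : ℕ) : ∑ b : Bool, spin b ^ k = if Even k then 2 else 0 := by
  rcases Nat.even_or_odd k with h | h
  · simp [spin, h, h.neg_one_pow]
  · simp [spin, h.neg_one_pow, Nat.not_even_iff_odd.mpr h]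

lemma sum_prod_spin_pow {ι : Type*} [Fintype ι] [DecidableEq ι] (d : ι → ℕ) :
    ∑ s : ι → Bool, ∏ v, spin (s v) ^ d v =
      if ∀ v, Even (d v) then 2 ^ Fintype.card ι else 0 := by
  rw [← Fintype.prod_sum fun v b => spin b ^ d v]
  simp only [sum_spin_pow]
  split_ifs with h
  · simp [h]
  · obtain ⟨v, hv⟩ := not_forall.mp h
    exact prod_eq_zero (mem_univ v) (if_neg hv)

end Spins

section EdgeSets

lemma isGraph_iff_subset_pairs {E : Finset (Edge N)} : IsGraph E ↔ E ⊆ pairs N := by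
  simp [IsGraph, pairs, subset_iff]

lemma mkEdge_mem_pairs {i j : Fin N} (hij : i ≠ j) : mkEdge i j ∈ pairs N := by
  rcases hij.lt_or_gt with h | h <;> simp [mkEdge, pairs, h, h.not_gt]

lemma apply_mkEdge_fst_mul_snd {M : Type*} [CommMonoid M] (σ : Fin N → M) (i j : Fin N) :
    σ (mkEdge i j).1 * σ (mkEdge i j).2 = σ i * σ j := by
  unfold mkEdge; split_ifs <;> simp [mul_comm]

lemma g_mkEdge {g : Fin N → Fin N → ℝ} (hsym : ∀ i j, g j i = g i j) (i j : Fin N) :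
    g (mkEdge i j).1 (mkEdge i j).2 = g i j := by
  unfold mkEdge; split_ifs <;> simp [hsym]

lemma prod_edge_eq_prod_pow_degree {M : Type*} [CommMonoid M] (σ : Fin N → M)
    {E : Finset (Edge N)} (hE : IsGraph E) :
    ∏ e ∈ E, σ e.1 * σ e.2 = ∏ v, σ v ^ degree E v := by
  simp_rw [degree, ← prod_const]
  rw [prod_comm' (t' := E) (s' := fun e => {e.1, e.2})]
  · exact prod_congr rfl fun e he => (prod_pair (hE e he).ne).symm
  · intro v e
    simp only [mem_univ, mem_filter, mem_insert, mem_singleton, true_and]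
    aesop

lemma prod_mul_prod_eq_prod_symmDiff {α M : Type*} [DecidableEq α] [CommMonoid M]
    {f : α → M} (hf : ∀ a, f a * f a = 1) (A B : Finset α) :
    (∏ a ∈ A, f a) * ∏ a ∈ B, f a = ∏ a ∈ A ∆ B, f a := by
  rw [← prod_union_inter, symmDiff_eq_sup_sdiff_inf, sup_eq_union, inf_eq_inter,
    ← prod_sdiff (inter_subset_union (s := A) (t := B)), mul_assoc, ← prod_mul_distrib]
  simp [hf]

end EdgeSets

section HighTemperatureExpansion

open Classical

variable (β : ℝ) (g : Fin N → Fin N → ℝ)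

lemma exp_mul_eq_cosh_mul_one_add_tanh_mul (a : ℝ) {x : ℝ} (hx : x = 1 ∨ x = -1) :
    Real.exp (a * x) = Real.cosh a * (1 + Real.tanh a * x) := by
  have hc := (Real.cosh_pos a).ne'
  rcases hx with rfl | rfl <;> rw [Real.tanh_eq_sinh_div_cosh] <;> field_simp
  · rw [Real.cosh_add_sinh]
  · rw [← Real.cosh_sub_sinh]; ring

lemma exp_hamil_spin (s : Fin N → Bool) :
    Real.exp (hamil β g fun v => spin (s v)) =
      (∏ e ∈ pairs N, Real.cosh (β * g e.1 e.2)) *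
        ∑ E ∈ (pairs N).powerset, wt β g E * ∏ e ∈ E, spin (s e.1) * spin (s e.2) := by
  simp_rw [wt, ← prod_mul_distrib, ← prod_one_add, ← prod_mul_distrib, hamil, mul_sum,
    Real.exp_sum]
  refine prod_congr rfl fun e _ => ?_
  rw [← mul_assoc,
    ← exp_mul_eq_cosh_mul_one_add_tanh_mul _ (spin_mul_spin_eq_one_or_neg_one _ _)]
  ring_nf

lemma sum_prod_edge_spin {E : Finset (Edge N)} (hE : IsGraph E) :
    ∑ s : Fin N → Bool, ∏ e ∈ E, spin (s e.1) * spin (s e.2) =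
      if IsClosed E then 2 ^ N else 0 := by
  rw [sum_congr rfl fun s _ => prod_edge_eq_prod_pow_degree (fun v => spin (s v)) hE,
    sum_prod_spin_pow, Fintype.card_fin]
  by_cases h : ∀ v, Even (degree E v) <;> simp [IsClosed, hE, h]

lemma sum_closed_symmDiff {M : Type*} [AddCommMonoid M] (f : Finset (Edge N) → M)
    {A : Finset (Edge N)} (hA : A ⊆ pairs N) :
    ∑ E ∈ (pairs N).powerset with IsClosed (A ∆ E), f E = ∑ F with IsClosed F, f (A ∆ F) := by
  refine sum_nbij' (A ∆ ·) (A ∆ ·) ?_ ?_ (fun _ _ => symmDiff_symmDiff_cancel_left ..)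
    (fun _ _ => symmDiff_symmDiff_cancel_left ..) fun _ _ => by rw [symmDiff_symmDiff_cancel_left]
  · intro E hE
    simp only [mem_filter, mem_powerset, mem_univ, true_and] at hE ⊢
    exact hE.2
  · intro F hF
    simp only [mem_filter, mem_powerset, mem_univ, true_and,
      symmDiff_symmDiff_cancel_left] at hF ⊢
    exact ⟨symmDiff_subset_union.trans (union_subset hA (isGraph_iff_subset_pairs.mp hF.1)), hF⟩

lemma sum_prod_edge_spin_mul_exp_hamil {A : Finset (Edge N)} (hA : A ⊆ pairs N) :
    ∑ s : Fin N → Bool,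
        (∏ e ∈ A, spin (s e.1) * spin (s e.2)) * Real.exp (hamil β g fun v => spin (s v)) =
      (∏ e ∈ pairs N, Real.cosh (β * g e.1 e.2)) * 2 ^ N *
        ∑ F with IsClosed F, wt β g (A ∆ F) := by
  have hspin (s : Fin N → Bool) (E : Finset (Edge N)) :
      (∏ e ∈ A, spin (s e.1) * spin (s e.2)) * ∏ e ∈ E, spin (s e.1) * spin (s e.2) =
        ∏ e ∈ A ∆ E, spin (s e.1) * spin (s e.2) :=
    prod_mul_prod_eq_prod_symmDiff (fun e => by
      rw [mul_mul_mul_comm, spin_mul_self, spin_mul_self, one_mul]) A E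
  have hgraph : ∀ E ∈ (pairs N).powerset, IsGraph (A ∆ E) := fun E hE =>
    isGraph_iff_subset_pairs.mpr
      (symmDiff_subset_union.trans (union_subset hA (mem_powerset.mp hE)))
  calc _ = (∏ e ∈ pairs N, Real.cosh (β * g e.1 e.2)) * ∑ E ∈ (pairs N).powerset,
        wt β g E * ∑ s : Fin N → Bool, ∏ e ∈ A ∆ E, spin (s e.1) * spin (s e.2) := by
        simp_rw [exp_hamil_spin, mul_sum, sum_comm (γ := Fin N → Bool)]
        refine sum_congr rfl fun E _ => sum_congr rfl fun s _ => ?_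
        rw [← hspin s E]; ring
    _ = _ := by
        rw [← sum_closed_symmDiff (wt β g) hA, sum_filter, mul_assoc]
        congr 1
        rw [mul_sum]
        refine sum_congr rfl fun E hE => ?_
        rw [sum_prod_edge_spin (hgraph E hE)]
        split_ifs <;> ring

lemma prod_cosh_mul_two_pow_pos : 0 < (∏ e ∈ pairs N, Real.cosh (β * g e.1 e.2)) * 2 ^ N :=
  mul_pos (prod_pos fun _ _ => Real.cosh_pos _) (by positivity)

lemma sum_exp_hamil_spin :
    ∑ s : Fin N → Bool, Real.exp (hamil β g fun v => spin (s v)) =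
      (∏ e ∈ pairs N, Real.cosh (β * g e.1 e.2)) * 2 ^ N * ∑ F with IsClosed F, wt β g F := by
  have h := sum_prod_edge_spin_mul_exp_hamil β g (empty_subset (pairs N))
  have hempty (F : Finset (Edge N)) : ∅ ∆ F = F := bot_symmDiff F
  simpa only [prod_empty, one_mul, hempty] using h

lemma sum_exp_hamil_spin_pos :
    0 < ∑ s : Fin N → Bool, Real.exp (hamil β g fun v => spin (s v)) :=
  sum_pos (fun _ _ => Real.exp_pos _) univ_nonempty

lemma sum_wt_closed_pos : 0 < ∑ F with IsClosed F, wt β g F := by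
  have hZ := sum_exp_hamil_spin_pos β g
  rw [sum_exp_hamil_spin] at hZ
  exact pos_of_mul_pos_right hZ (prod_cosh_mul_two_pow_pos β g).le

end HighTemperatureExpansion

section TwoPointFunction

open Classical

variable (β : ℝ) (g : Fin N → Fin N → ℝ)

lemma Mmat_self (i : Fin N) : Mmat β g i i = 1 := by
  simp only [Mmat, Matrix.of_apply, gibbs, spin_mul_self, one_mul]
  exact div_self (sum_exp_hamil_spin_pos β g).ne'

lemma Mmat_eq_div_of_ne {i j : Fin N} (hij : i ≠ j) :
    Mmat β g i j =
      (∑ F with IsClosed F, wt β g ({mkEdge i j} ∆ F)) / ∑ F with IsClosed F, wt β g F := by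
  have hnum := sum_prod_edge_spin_mul_exp_hamil β g
    (singleton_subset_iff.mpr (mkEdge_mem_pairs hij))
  have hpair (s : Fin N → Bool) :
      spin (s (mkEdge i j).1) * spin (s (mkEdge i j).2) = spin (s i) * spin (s j) :=
    apply_mkEdge_fst_mul_snd (fun v => spin (s v)) i j
  simp only [prod_singleton, hpair] at hnum
  simp only [Mmat, Matrix.of_apply, gibbs]
  rw [hnum, sum_exp_hamil_spin, mul_div_mul_left _ _ (prod_cosh_mul_two_pow_pos β g).ne']

lemma wt_eq_tanh_mul_wt_erase {e : Edge N} {F : Finset (Edge N)} (he : e ∈ F) :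
    wt β g F = Real.tanh (β * g e.1 e.2) * wt β g (F.erase e) :=
  (mul_prod_erase F _ he).symm

lemma wt_singleton_symmDiff (e : Edge N) (F : Finset (Edge N)) :
    wt β g ({e} ∆ F) =
      if e ∈ F then wt β g (F.erase e) else Real.tanh (β * g e.1 e.2) * wt β g F := by
  split_ifs with he
  · congr 1
    ext x
    by_cases hx : x = e <;> simp [mem_symmDiff, hx, he]
  · have : {e} ∆ F = insert e F := by
      ext x
      by_cases hx : x = e <;> simp [mem_symmDiff, hx, he]
    rw [this, wt, prod_insert he]
    rfl

lemma sum_wt_singleton_symmDiff (S : Finset (Finset (Edge N))) (e : Edge N) :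
    ∑ F ∈ S, wt β g ({e} ∆ F) =
      ∑ F ∈ S with e ∈ F, wt β g (F.erase e) +
        Real.tanh (β * g e.1 e.2) * ∑ F ∈ S with e ∉ F, wt β g F := by
  simp_rw [wt_singleton_symmDiff, sum_ite, mul_sum]

lemma sum_wt_eq_tanh_mul_add (S : Finset (Finset (Edge N))) (e : Edge N) :
    ∑ F ∈ S, wt β g F =
      Real.tanh (β * g e.1 e.2) * ∑ F ∈ S with e ∈ F, wt β g (F.erase e) +
        ∑ F ∈ S with e ∉ F, wt β g F := by
  rw [← sum_filter_add_sum_filter_not S (e ∈ ·), mul_sum]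
  congr 1
  exact sum_congr rfl fun F hF => wt_eq_tanh_mul_wt_erase β g (mem_filter.mp hF).2

end TwoPointFunction

lemma add_mul_div_mul_add_eq {t a b : ℝ} (h : t * a + b ≠ 0) :
    (a + t * b) / (t * a + b) = t + (1 - t ^ 2) * a / (t * a + b) := by
  rw [add_div' _ _ _ h]
  ring

lemma finsum_mem_setOf_eq_sum_filter {α M : Type*} [Fintype α] [AddCommMonoid M]
    (p : α → Prop) [DecidablePred p] (f : α → M) :
    ∑ᶠ a ∈ {a | p a}, f a = ∑ a with p a, f a := by
  rw [← finsum_mem_coe_finset, coe_filter_univ]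

theorem two_point_graphical_representation_general (N : ℕ) (β : ℝ) (g : Fin N → Fin N → ℝ)
    (hsym : ∀ i j, g j i = g i j) :
    (∀ i j : Fin N, i ≠ j →
      Mmat β g i j =
        Real.tanh (β * g i j) +
          (1 - Real.tanh (β * g i j) ^ 2) *
            (∑ᶠ E ∈ {E : Finset (Edge N) | IsClosed E ∧ mkEdge i j ∈ E},
                ∏ e ∈ E.erase (mkEdge i j), Real.tanh (β * g e.1 e.2)) /
              ∑ᶠ E ∈ {E : Finset (Edge N) | IsClosed E}, wt β g E) ∧
    ∀ i : Fin N, Mmat β g i i = 1 := by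
  classical
  refine ⟨fun i j hij => ?_, Mmat_self β g⟩
  have hnum := sum_wt_singleton_symmDiff β g {F | IsClosed F} (mkEdge i j)
  have hZ := sum_wt_eq_tanh_mul_add β g {F | IsClosed F} (mkEdge i j)
  simp only [filter_filter, g_mkEdge hsym] at hnum hZ
  have hpos := sum_wt_closed_pos β g
  rw [hZ] at hpos
  rw [Mmat_eq_div_of_ne β g hij, finsum_mem_setOf_eq_sum_filter, finsum_mem_setOf_eq_sum_filter,
    hnum, hZ]
  exact add_mul_div_mul_add_eq hpos.ne'

/-- graphical representation of the two point function:
`⟨σ_i σ_j⟩ = tanh(β g_{ij}) + (1 - tanh²(β g_{ij})) Ẑ_N⁻¹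
  ∑_{γ ∈ Γ_sc, {i,j} ∈ γ} ∏_{e ∈ γ, e ≠ {i,j}} tanh(β g_e)` for `i ≠ j`,
and `⟨σ_i σ_i⟩ = 1`. -/
theorem two_point_graphical_representation (N : ℕ) (β : ℝ) (g : Fin N → Fin N → ℝ)
    (hsym : ∀ i j, g j i = g i j) (hdiag : ∀ i, g i i = 0) :
    (∀ i j : Fin N, i ≠ j →
      Mmat β g i j =
        Real.tanh (β * g i j) +
          (1 - Real.tanh (β * g i j) ^ 2) *
            (∑ᶠ E ∈ {E : Finset (Edge N) | IsClosed E ∧ mkEdge i j ∈ E},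
                ∏ e ∈ E.erase (mkEdge i j), Real.tanh (β * g e.1 e.2)) /
              ∑ᶠ E ∈ {E : Finset (Edge N) | IsClosed E}, wt β g E) ∧
    ∀ i : Fin N, Mmat β g i i = 1 :=
  two_point_graphical_representation_general N β g hsym

end SK
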